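/- arXiv:2205.09902 — 2 statements merged into one kernel-verified Lean document; each statement's English description precedes it below -/
import Mathlib

section
/- For every n ≥ 0, the Apéry number A(n) = Σ_{k=0}^n binom(n,k)^2·binom(n+k,k)^2 equals the constant term of the Laurent polynomial ((x+y)(z+1)(x+y+z)(y+z+1)/(xyz))^n. -/
/-- Laurent polynomials with integer coefficients in `d` variables. -/
abbrev LP (d : ℕ) := AddMonoidAlgebra ℤ (Fin d → ℤ)

/-- The monomial `x^k` in `LP d`. -/
noncomputable def mono {d : ℕ} (k : Fin d → ℤ) : LP d := AddMonoidAlgebra.single k 1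

open Finset AddMonoidAlgebra

lemma mono_pow {d : ℕ} (k : Fin d → ℤ) (m : ℕ) :
    (mono k) ^ m = AddMonoidAlgebra.single (m • k) 1 := by
  simp [mono, AddMonoidAlgebra.single_pow]

lemma bi {d : ℕ} (u v : Fin d → ℤ) (n : ℕ) :
    (mono u + mono v) ^ n
      = ∑ a ∈ range (n + 1),
          AddMonoidAlgebra.single ((a • u) + ((n - a) • v)) ((n.choose a : ℕ) : ℤ) := by
  rw [add_pow]
  refine Finset.sum_congr rfl fun a _ => ?_
  rw [mono_pow, mono_pow, AddMonoidAlgebra.single_mul_single,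
    AddMonoidAlgebra.natCast_def, AddMonoidAlgebra.single_mul_single]
  simp

lemma tri {d : ℕ} (u v w : Fin d → ℤ) (n : ℕ) :
    (mono u + mono v + mono w) ^ n
      = ∑ c ∈ range (n + 1), ∑ e ∈ range (c + 1),
          AddMonoidAlgebra.single ((e • u) + ((c - e) • v) + ((n - c) • w))
            ((n.choose c * c.choose e : ℕ) : ℤ) := by
  rw [add_pow]
  refine Finset.sum_congr rfl fun c _ => ?_
  rw [bi, mono_pow, Finset.sum_mul, Finset.sum_mul]
  refine Finset.sum_congr rfl fun e _ => ?_
  rw [AddMonoidAlgebra.single_mul_single, AddMonoidAlgebra.natCast_def,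
    AddMonoidAlgebra.single_mul_single]
  simp only [add_zero, mul_one, one_mul]
  congr 1
  push_cast
  ring

lemma mono_zero {d : ℕ} : (mono (0 : Fin d → ℤ)) = 1 := rfl

lemma bi1 {d : ℕ} (u : Fin d → ℤ) (n : ℕ) :
    (mono u + 1) ^ n
      = ∑ a ∈ range (n + 1), AddMonoidAlgebra.single (a • u) ((n.choose a : ℕ) : ℤ) := by
  rw [← mono_zero, bi]
  simp

lemma tri1 {d : ℕ} (u v : Fin d → ℤ) (n : ℕ) :
    (mono u + mono v + 1) ^ n
      = ∑ c ∈ range (n + 1), ∑ e ∈ range (c + 1),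
          AddMonoidAlgebra.single ((e • u) + ((c - e) • v))
            ((n.choose c * c.choose e : ℕ) : ℤ) := by
  rw [← mono_zero (d := d), tri]
  simp

lemma vand (M N k : ℕ) :
    ∑ t ∈ range (k + 1), M.choose t * N.choose (k - t) = (M + N).choose k := by
  rw [Nat.add_choose_eq, Finset.Nat.sum_antidiagonal_eq_sum_range_succ_mk]

lemma Spe (n e : ℕ) (he : e ≤ n) :
    ∑ p ∈ range (n + 1), n.choose p * n.choose p * p.choose e
      = n.choose e * ((n - e) + n).choose (n - e) := by
  rw [range_eq_Ico, ← Finset.sum_Ico_consecutive _ (Nat.zero_le e) (by omega : e ≤ n + 1)]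
  have h1 : ∑ p ∈ Ico 0 e, n.choose p * n.choose p * p.choose e = 0 :=
    Finset.sum_eq_zero fun p hp => by
      rw [Nat.choose_eq_zero_of_lt (mem_Ico.mp hp).2, mul_zero]
  rw [h1, zero_add, Finset.sum_Ico_eq_sum_range]
  have hr : n + 1 - e = (n - e) + 1 := by omega
  rw [hr, ← vand (n - e) n (n - e), Finset.mul_sum]
  refine Finset.sum_congr rfl fun t ht => ?_
  have htn : e + t ≤ n := by have := mem_range.mp ht; omega
  have key : n.choose (e + t) * (e + t).choose e = n.choose e * (n - e).choose t := by
    rw [Nat.choose_mul (Nat.le_add_right e t), Nat.add_sub_cancel_left]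
  have h2 : n.choose (e + t) = n.choose ((n - e) - t) := by
    rw [← Nat.choose_symm htn]; congr 1; omega
  calc n.choose (e + t) * n.choose (e + t) * (e + t).choose e
      = (n.choose (e + t) * (e + t).choose e) * n.choose (e + t) := by ring
    _ = (n.choose e * (n - e).choose t) * n.choose ((n - e) - t) := by rw [key, h2]
    _ = n.choose e * ((n - e).choose t * n.choose ((n - e) - t)) := by ring

lemma partB (n : ℕ) :
    ∑ p ∈ range (n + 1), ∑ e ∈ range (p + 1), ∑ a ∈ range (n + 1),
      (n.choose p * p.choose e) * ((n.choose (n - e) * (n - e).choose (n - a))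
        * (n.choose a * n.choose (n - p)))
      = ∑ k ∈ range (n + 1), n.choose k ^ 2 * ((n + k).choose k) ^ 2 := by
  calc
    ∑ p ∈ range (n + 1), ∑ e ∈ range (p + 1), ∑ a ∈ range (n + 1),
      (n.choose p * p.choose e) * ((n.choose (n - e) * (n - e).choose (n - a))
        * (n.choose a * n.choose (n - p)))
      = ∑ p ∈ range (n + 1), ∑ e ∈ range (p + 1),
          (n.choose p * p.choose e * (n.choose (n - e) * n.choose (n - p)))
            * ((n + (n - e)).choose n) := by
        refine Finset.sum_congr rfl fun p hp => Finset.sum_congr rfl fun e he => ?_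
        rw [← vand n (n - e) n, Finset.mul_sum]
        exact Finset.sum_congr rfl fun a ha => by ring
    _ = ∑ p ∈ range (n + 1), ∑ e ∈ range (n + 1),
          (n.choose p * n.choose p * p.choose e) * (n.choose e * (n + (n - e)).choose n) := by
        refine Finset.sum_congr rfl fun p hp => ?_
        have hpn : p ≤ n := by have := mem_range.mp hp; omega
        rw [← Finset.sum_subset (Finset.range_subset_range.mpr (by omega : p + 1 ≤ n + 1))
          (fun e _ he => by
            rw [Nat.choose_eq_zero_of_lt (by simpa using he : p < e)]
            ring)]
        refine Finset.sum_congr rfl fun e he => ?_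
        have hen : e ≤ n := by have := mem_range.mp he; omega
        rw [Nat.choose_symm hpn, Nat.choose_symm hen]
        ring
    _ = ∑ e ∈ range (n + 1),
          (n.choose e * (n + (n - e)).choose n)
            * ∑ p ∈ range (n + 1), n.choose p * n.choose p * p.choose e := by
        rw [Finset.sum_comm]
        refine Finset.sum_congr rfl fun e he => ?_
        rw [Finset.mul_sum]
        exact Finset.sum_congr rfl fun p hp => by ring
    _ = ∑ e ∈ range (n + 1),
          (n.choose e * (n + (n - e)).choose n) * (n.choose e * ((n - e) + n).choose (n - e)) := by
        refine Finset.sum_congr rfl fun e he => ?_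
        rw [Spe n e (by have := mem_range.mp he; omega)]
    _ = ∑ k ∈ range (n + 1), n.choose k ^ 2 * ((n + k).choose k) ^ 2 := by
        rw [← Finset.sum_range_reflect]
        refine Finset.sum_congr rfl fun e he => ?_
        have hen : e ≤ n := by have := mem_range.mp he; omega
        have h0 : n + 1 - 1 - e = n - e := by omega
        rw [h0]
        have h1 : n - (n - e) = e := by omega
        rw [h1, Nat.choose_symm hen]
        have h2 : (n + e).choose n = (n + e).choose e := Nat.choose_symm_add
        have h3 : (e + n).choose e = (n + e).choose e := by rw [Nat.add_comm e n]
        rw [h2, h3]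
        ring

lemma vec_iff (n i x x1 x2 x3 x4 : ℕ) (hx : x ≤ i) (hx3 : x3 ≤ x2) (hx1 : x1 ≤ n)
    (hx2 : x2 ≤ n) (hi : i ≤ n) :
    (x4 • ![(0:ℤ),0,1] + (x3 • ![(1:ℤ),0,0] + (x2-x3) • ![(0:ℤ),1,0] + (n-x2) • ![(0:ℤ),0,1])
      + (x1 • ![(1:ℤ),0,0] + (n-x1) • ![(0:ℤ),1,0]) + (x • ![(0:ℤ),1,0] + (i-x) • ![(0:ℤ),0,1])
      + n • ![(-1:ℤ),-1,-1] = (0 : Fin 3 → ℤ))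
    ↔ (x4 = n - i ∧ x3 = n - x1 ∧ x2 = n - x) := by
  constructor
  · intro h
    have h0 := congrFun h 0
    have h1 := congrFun h 1
    have h2 := congrFun h 2
    simp [Pi.add_apply, Pi.smul_apply, Matrix.cons_val_zero, Matrix.cons_val_one,
      Matrix.head_cons, Matrix.cons_val_two, Matrix.tail_cons, nsmul_eq_mul] at h0 h1 h2
    omega
  · rintro ⟨h4, h3, h2⟩
    funext j
    fin_cases j <;>
      simp [Pi.add_apply, Pi.smul_apply, Matrix.cons_val_zero, Matrix.cons_val_one,
        Matrix.head_cons, Matrix.cons_val_two, Matrix.tail_cons, nsmul_eq_mul] <;>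
      omega

lemma sum_swap_collapse (m b : ℕ) (P : ℕ → Prop) [DecidablePred P] (f : ℕ → ℤ) (hb : b < m) :
    (∑ j ∈ Finset.range m, if P j then (if j = b then f j else 0) else 0)
      = if P b then f b else 0 := by
  calc ∑ j ∈ Finset.range m, (if P j then (if j = b then f j else 0) else 0)
      = ∑ j ∈ Finset.range m, (if j = b then (if P j then f j else 0) else 0) :=
        Finset.sum_congr rfl fun j _ => by split_ifs <;> rfl
    _ = if b ∈ Finset.range m then (if P b then f b else 0) else 0 := Finset.sum_ite_eq' _ _ _
    _ = if P b then f b else 0 := by rw [if_pos (Finset.mem_range.mpr hb)]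

/-- The Apéry number `A(n) = Σ_k binom(n,k)² binom(n+k,k)²` is the constant term of
`((x+y)(z+1)(x+y+z)(y+z+1)/(xyz))^n`. -/
theorem apery3_eq_constantTerm (n : ℕ) :
    (((mono ![1, 0, 0] + mono ![0, 1, 0]) * (mono ![0, 0, 1] + 1)
        * (mono ![1, 0, 0] + mono ![0, 1, 0] + mono ![0, 0, 1])
        * (mono ![0, 1, 0] + mono ![0, 0, 1] + 1)
        * mono ![-1, -1, -1]) ^ n : LP 3).coeff (0 : Fin 3 → ℤ)
      = (∑ k ∈ Finset.range (n + 1), (n.choose k) ^ 2 * ((n + k).choose k) ^ 2 : ℤ) := by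
  have hre : (((mono ![1, 0, 0] + mono ![0, 1, 0]) * (mono ![0, 0, 1] + 1)
        * (mono ![1, 0, 0] + mono ![0, 1, 0] + mono ![0, 0, 1])
        * (mono ![0, 1, 0] + mono ![0, 0, 1] + 1)
        * mono ![-1, -1, -1]) ^ n : LP 3)
      = (mono ![0, 0, 1] + 1) ^ n
        * (mono ![1, 0, 0] + mono ![0, 1, 0] + mono ![0, 0, 1]) ^ n
        * (mono ![1, 0, 0] + mono ![0, 1, 0]) ^ n
        * (mono ![0, 1, 0] + mono ![0, 0, 1] + 1) ^ n
        * (mono ![(-1 : ℤ), -1, -1]) ^ n := by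
    rw [mul_pow, mul_pow, mul_pow, mul_pow]; ring
  rw [hre, tri1, tri, bi, bi1, mono_pow]
  simp only [Finset.sum_mul, Finset.mul_sum, AddMonoidAlgebra.single_mul_single, mul_one, one_mul]
  simp only [AddMonoidAlgebra.coeff_sum, AddMonoidAlgebra.coeff_single]
  refine ((Finsupp.finset_sum_apply _ _ _).trans (Finset.sum_congr rfl fun i _ =>
    (Finsupp.finset_sum_apply _ _ _).trans (Finset.sum_congr rfl fun x _ =>
    (Finsupp.finset_sum_apply _ _ _).trans (Finset.sum_congr rfl fun x1 _ =>
    (Finsupp.finset_sum_apply _ _ _).trans (Finset.sum_congr rfl fun x2 _ =>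
    (Finsupp.finset_sum_apply _ _ _).trans (Finset.sum_congr rfl fun x3 _ =>
    (Finsupp.finset_sum_apply _ _ _).trans (Finset.sum_congr rfl fun x4 _ =>
    Finsupp.single_apply))))))).trans ?_
  refine (Finset.sum_congr rfl fun i hi => Finset.sum_congr rfl fun x hx =>
    Finset.sum_congr rfl fun x1 hx1 => Finset.sum_congr rfl fun x2 hx2 =>
    Finset.sum_congr rfl fun x3 hx3 => Finset.sum_congr rfl fun x4 hx4 =>
    if_congr (vec_iff n i x x1 x2 x3 x4
      (Nat.lt_succ_iff.mp (Finset.mem_range.mp hx))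
      (Nat.lt_succ_iff.mp (Finset.mem_range.mp hx3))
      (Nat.lt_succ_iff.mp (Finset.mem_range.mp hx1))
      (Nat.lt_succ_iff.mp (Finset.mem_range.mp hx2))
      (Nat.lt_succ_iff.mp (Finset.mem_range.mp hi))) rfl rfl).trans ?_
  simp only [ite_and]
  simp only [Finset.sum_ite_eq', Finset.mem_range, Nat.lt_succ_iff, Nat.sub_le, if_true]
  refine (Finset.sum_congr rfl fun i hi => Finset.sum_congr rfl fun x hx =>
      Finset.sum_congr rfl fun x1 hx1 =>
        ((sum_swap_collapse n.succ (n - x) _ _ (by omega)).trans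
          (show (if n - x1 ≤ n - x then
              ((n.choose (n - i) : ℤ) * ↑(n.choose (n - x) * (n - x).choose (n - x1))
                * ↑(n.choose x1) * ↑(n.choose i * i.choose x)) else 0)
            = ((n.choose (n - i) : ℤ) * ↑(n.choose (n - x) * (n - x).choose (n - x1))
                * ↑(n.choose x1) * ↑(n.choose i * i.choose x)) from by
            split_ifs with h
            · rfl
            · have hz : (n - x).choose (n - x1) = 0 := Nat.choose_eq_zero_of_lt (by omega)
              simp [hz]))).trans ?_
  have h2 : ((∑ p ∈ Finset.range (n + 1), ∑ e ∈ Finset.range (p + 1), ∑ a ∈ Finset.range (n + 1),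
      (n.choose p * p.choose e) * ((n.choose (n - e) * (n - e).choose (n - a))
        * (n.choose a * n.choose (n - p))) : ℕ) : ℤ)
      = ∑ k ∈ Finset.range (n + 1), (n.choose k : ℤ) ^ 2 * ((n + k).choose k : ℤ) ^ 2 := by
    rw [partB n]; push_cast; rfl
  rw [← h2]
  push_cast
  refine Finset.sum_congr rfl fun i _ => Finset.sum_congr rfl fun x _ =>
    Finset.sum_congr rfl fun x1 _ => by ring
end

section
/- For all n ≥ 2, the Catalan number C(n) is not congruent to 1 modulo 8. -/
/-!
Pairing the terms `i` and `n - i` of the recurrence `C(n + 1) = ∑ C(i) C(n - i)` gives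
`C(2m + 1) = 2 ∑_{i < m} C(i) C(2m - i) + C(m)²` and `C(2m + 2) = 2 ∑_{i ≤ m} C(i) C(2m + 1 - i)`.
Hence `C(n)` is odd exactly when `n + 1` is a power of two, and an even `C(n)` is `≡ 2 (mod 4)`
exactly when `n + 1` is a sum of two distinct powers of two (by uniqueness of binary expansions,
the half sum has at most one odd term). For `n = 2^a - 1 = 2m + 1` with `a ≥ 2`, `C(m)` is odd, so `C(m)² ≡ 1 (mod 8)`,
and the only term of the half sum not divisible by `4` is the one with `i + 1 = 2^(a-2)`,
`2m - i + 1 = 2^(a-2) + 2^(a-1)`, which is `≡ 2 (mod 4)`. So `C(2^a - 1) ≡ 5 (mod 8)`, while every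
other `C(n)` is even.
-/

open Finset

theorem Nat.bitIndices_two_pow_add_two_pow {b c : ℕ} (h : b < c) :
    (2 ^ b + 2 ^ c).bitIndices = [b, c] := by
  simpa using
    Nat.bitIndices_sum_map_two_pow (L := [b, c]) (by simp [List.sortedLT_iff_pairwise, h])

theorem Nat.two_pow_add_two_pow_inj {b c b' c' : ℕ} (h : b < c) (h' : b' < c')
    (e : 2 ^ b + 2 ^ c = 2 ^ b' + 2 ^ c') : b = b' ∧ c = c' := by
  simpa [Nat.bitIndices_two_pow_add_two_pow, h, h'] using congrArg Nat.bitIndices e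

theorem Nat.two_pow_add_two_pow_eq_two_pow {b c a : ℕ} (h : 2 ^ b + 2 ^ c = 2 ^ a) :
    b = c ∧ a = b + 1 := by
  have hne : ∀ {x y}, x < y → 2 ^ x + 2 ^ y ≠ 2 ^ a := fun hxy e => by
    simpa [Nat.bitIndices_two_pow_add_two_pow hxy] using congrArg Nat.bitIndices e
  rcases lt_trichotomy b c with hbc | rfl | hbc
  · exact absurd h (hne hbc)
  · refine ⟨rfl, Nat.pow_right_injective le_rfl ?_⟩
    simp only [← h, pow_succ]
    ring
  · exact absurd (by rw [add_comm]; exact h) (hne hbc)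

theorem Nat.succ_eq_of_two_pow_add_two_pow_add_two_pow_eq {d e f b : ℕ} (hd : d < b)
    (hef : e < f) (h : 2 ^ d + 2 ^ e + 2 ^ f = 2 ^ (b + 1)) : d + 1 = b := by
  have hfb : f = b := by
    have hf : f < b + 1 := (Nat.pow_lt_pow_iff_right (a := 2) (by norm_num)).mp <| by
      rw [← h]
      exact Nat.lt_add_of_pos_left (by positivity)
    by_contra hne
    obtain ⟨b, rfl⟩ : ∃ b', b = b' + 1 := ⟨b - 1, by omega⟩
    have := Nat.pow_le_pow_right (n := 2) (by norm_num) (show d ≤ b by omega)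
    have := Nat.pow_le_pow_right (n := 2) (by norm_num) (show f ≤ b by omega)
    have := Nat.pow_lt_pow_right (a := 2) (by norm_num) hef
    rw [pow_succ, pow_succ] at h
    omega
  subst hfb
  have := Nat.two_pow_add_two_pow_eq_two_pow (b := d) (c := e) (a := f)
    (by rw [pow_succ] at h; omega)
  omega

theorem Finset.sum_range_two_mul_add_one_of_symm {M : Type*} [AddCommMonoid M] (f : ℕ → M)
    (m : ℕ) (hf : ∀ i ≤ 2 * m, f (2 * m - i) = f i) :
    ∑ i ∈ range (2 * m + 1), f i = 2 • ∑ i ∈ range m, f i + f m := by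
  have hupper : ∑ i ∈ range m, f (m + (i + 1)) = ∑ i ∈ range m, f i := by
    rw [← sum_range_reflect f m]
    refine sum_congr rfl fun i hi => ?_
    have := mem_range.mp hi
    rw [← hf _ (by omega)]
    congr 1
    omega
  rw [show 2 * m + 1 = m + (m + 1) by ring, sum_range_add, sum_range_succ', hupper, two_nsmul,
    add_zero]
  abel

theorem Finset.sum_range_two_mul_add_two_of_symm {M : Type*} [AddCommMonoid M] (f : ℕ → M)
    (m : ℕ) (hf : ∀ i ≤ 2 * m + 1, f (2 * m + 1 - i) = f i) :
    ∑ i ∈ range (2 * m + 2), f i = 2 • ∑ i ∈ range (m + 1), f i := by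
  have hupper : ∑ i ∈ range (m + 1), f (m + 1 + i) = ∑ i ∈ range (m + 1), f i := by
    rw [← sum_range_reflect f (m + 1)]
    refine sum_congr rfl fun i hi => ?_
    have := mem_range.mp hi
    rw [← hf _ (by omega)]
    congr 1
    omega
  rw [show 2 * m + 2 = (m + 1) + (m + 1) by ring, sum_range_add, hupper, two_nsmul]

theorem catalan_succ_eq_sum_range (n : ℕ) :
    catalan (n + 1) = ∑ i ∈ range (n + 1), catalan i * catalan (n - i) := by
  rw [catalan_succ, Fin.sum_univ_eq_sum_range (fun i => catalan i * catalan (n - i))]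

theorem catalan_two_mul_add_one (m : ℕ) :
    catalan (2 * m + 1) = 2 * ∑ i ∈ range m, catalan i * catalan (2 * m - i) + catalan m ^ 2 := by
  rw [catalan_succ_eq_sum_range, sum_range_two_mul_add_one_of_symm, smul_eq_mul,
    show 2 * m - m = m by omega, sq]
  intro i hi
  rw [Nat.sub_sub_self hi, mul_comm]

theorem catalan_two_mul_add_two (m : ℕ) :
    catalan (2 * m + 2) = 2 * ∑ i ∈ range (m + 1), catalan i * catalan (2 * m + 1 - i) := by
  rw [catalan_succ_eq_sum_range, sum_range_two_mul_add_two_of_symm, smul_eq_mul]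
  intro i hi
  rw [Nat.sub_sub_self hi, mul_comm]

theorem Nat.exists_two_mul_eq_two_pow_iff {k : ℕ} :
    (∃ a, 2 * k = 2 ^ a) ↔ ∃ a, k = 2 ^ a := by
  constructor
  · rintro ⟨_ | a, h⟩
    · omega
    · exact ⟨a, by rw [pow_succ] at h; omega⟩
  · rintro ⟨a, rfl⟩
    exact ⟨a + 1, by rw [pow_succ, mul_comm]⟩

theorem odd_catalan_iff (n : ℕ) : Odd (catalan n) ↔ ∃ a, n + 1 = 2 ^ a := by
  induction n using Nat.strong_induction_on with
  | _ n ih =>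
  obtain ⟨m, rfl | rfl⟩ := Nat.even_or_odd' n
  · rcases m with _ | m
    · simpa [catalan_zero] using ⟨0, rfl⟩
    rw [show 2 * (m + 1) = 2 * m + 2 by ring, catalan_two_mul_add_two]
    simp only [Nat.not_odd_iff_even.mpr (even_two_mul _), false_iff, not_exists]
    rintro (_ | a) h
    · omega
    · rw [pow_succ] at h
      omega
  · rw [catalan_two_mul_add_one, Nat.odd_add', Nat.odd_pow_iff two_ne_zero, ih m (by omega),
      show 2 * m + 1 + 1 = 2 * (m + 1) by ring, Nat.exists_two_mul_eq_two_pow_iff]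
    simp

theorem odd_sum_catalan_mul_catalan_iff (k : ℕ) :
    Odd (∑ i ∈ range ((k + 1) / 2), catalan i * catalan (k - i)) ↔
      ∃ b c, b < c ∧ k + 2 = 2 ^ b + 2 ^ c := by
  classical
  have hodd_term : ∀ i ∈ range ((k + 1) / 2), Odd (catalan i * catalan (k - i)) ↔
      ∃ b c, b < c ∧ i + 1 = 2 ^ b ∧ k + 2 = 2 ^ b + 2 ^ c := by
    intro i hi
    have hik := mem_range.mp hi
    rw [Nat.odd_mul, odd_catalan_iff, odd_catalan_iff]
    constructor
    · rintro ⟨⟨b, hb⟩, ⟨c, hc⟩⟩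
      exact ⟨b, c, (Nat.pow_lt_pow_iff_right (a := 2) (by norm_num)).mp (by omega), hb, by omega⟩
    · rintro ⟨b, c, -, hb, hc⟩
      exact ⟨⟨b, hb⟩, ⟨c, by omega⟩⟩
  rw [Finset.odd_sum_iff_odd_card_odd, filter_congr hodd_term]
  by_cases h : ∃ b c, b < c ∧ k + 2 = 2 ^ b + 2 ^ c
  · obtain ⟨b, c, hbc, hk⟩ := h
    suffices {i ∈ range ((k + 1) / 2) | ∃ b c, b < c ∧ i + 1 = 2 ^ b ∧ k + 2 = 2 ^ b + 2 ^ c}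
        = {2 ^ b - 1} by simpa [this] using ⟨b, c, hbc, hk⟩
    have := Nat.pow_lt_pow_right (a := 2) (by norm_num) hbc
    have := Nat.two_pow_pos b
    ext i
    simp only [mem_filter, mem_range, mem_singleton]
    constructor
    · rintro ⟨-, b', c', hbc', hb', hk'⟩
      obtain rfl := (Nat.two_pow_add_two_pow_inj hbc' hbc (hk'.symm.trans hk)).1
      omega
    · rintro rfl
      exact ⟨by omega, b, c, hbc, by omega, hk⟩
  · simp only [h, iff_false]
    rw [filter_false_of_mem fun i _ ⟨b, c, hbc, _, hk⟩ => h ⟨b, c, hbc, hk⟩]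
    simp

theorem catalan_mod_four_eq_two_iff {n : ℕ} (hn : ¬∃ a, n + 1 = 2 ^ a) :
    catalan n % 4 = 2 ↔ ∃ b c, b < c ∧ n + 1 = 2 ^ b + 2 ^ c := by
  obtain ⟨m, rfl | rfl⟩ := Nat.even_or_odd' n
  · rcases m with _ | m
    · exact absurd ⟨0, rfl⟩ hn
    have := odd_sum_catalan_mul_catalan_iff (2 * m + 1)
    rw [show (2 * m + 1 + 1) / 2 = m + 1 by omega, Nat.odd_iff] at this
    rw [show 2 * (m + 1) = 2 * m + 2 by ring, catalan_two_mul_add_two, ← this]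
    omega
  · have heven : Even (catalan m) := by
      rw [← Nat.not_odd_iff_even, odd_catalan_iff]
      rintro ⟨a, ha⟩
      exact hn ⟨a + 1, by rw [pow_succ]; omega⟩
    obtain ⟨r, hr⟩ := heven
    have := odd_sum_catalan_mul_catalan_iff (2 * m)
    rw [show (2 * m + 1) / 2 = m by omega, Nat.odd_iff] at this
    rw [catalan_two_mul_add_one, ← this, hr, show (r + r) ^ 2 = 4 * r ^ 2 by ring]
    omega

theorem sum_catalan_mul_catalan_mod_four {b m : ℕ} (hb : 1 ≤ b) (hm : m + 1 = 2 ^ b) :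
    (∑ i ∈ range m, catalan i * catalan (2 * m - i)) % 4 = 2 := by
  have h2b : 2 ^ b = 2 * 2 ^ (b - 1) := by rw [← pow_succ', Nat.sub_add_cancel hb]
  have hpos := Nat.two_pow_pos (b - 1)
  have hpartner : ∀ i < m, ¬∃ c, 2 * m - i + 1 = 2 ^ c := by
    rintro i hi ⟨c, hc⟩
    have : b < c := (Nat.pow_lt_pow_iff_right (a := 2) (by norm_num)).mp (by omega)
    have : c < b + 1 :=
      (Nat.pow_lt_pow_iff_right (a := 2) (by norm_num)).mp (by rw [pow_succ]; omega)
    omega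
  have hpartner_even : ∀ i < m, 2 ∣ catalan (2 * m - i) := fun i hi => by
    rw [← even_iff_two_dvd, ← Nat.not_odd_iff_even, odd_catalan_iff]
    exact hpartner i hi
  rw [sum_nat_mod, sum_eq_single_of_mem (2 ^ (b - 1) - 1) (mem_range.mpr (by omega))]
  · have hodd : catalan (2 ^ (b - 1) - 1) % 2 = 1 :=
      Nat.odd_iff.mp ((odd_catalan_iff _).mpr ⟨b - 1, by omega⟩)
    have htwo : catalan (2 * m - (2 ^ (b - 1) - 1)) % 4 = 2 :=
      (catalan_mod_four_eq_two_iff (hpartner _ (by omega))).mpr ⟨b - 1, b, by omega, by omega⟩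
    rw [Nat.mod_mod, Nat.mul_mod, htwo]
    obtain h | h : catalan (2 ^ (b - 1) - 1) % 4 = 1 ∨ catalan (2 ^ (b - 1) - 1) % 4 = 3 := by
      omega
    all_goals rw [h]
  · intro i hi hne
    have hi := mem_range.mp hi
    rw [← Nat.dvd_iff_mod_eq_zero]
    rcases Nat.even_or_odd (catalan i) with he | ho
    · exact Nat.mul_dvd_mul (even_iff_two_dvd.mp he) (hpartner_even i hi)
    obtain ⟨d, hd⟩ := (odd_catalan_iff i).mp ho
    have hne_two : catalan (2 * m - i) % 4 ≠ 2 := by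
      rw [Ne, catalan_mod_four_eq_two_iff (hpartner i hi)]
      rintro ⟨e, f, hef, hk⟩
      have hdb : d < b := (Nat.pow_lt_pow_iff_right (a := 2) (by norm_num)).mp (by omega)
      have := Nat.succ_eq_of_two_pow_add_two_pow_add_two_pow_eq hdb hef
        (by rw [pow_succ]; omega)
      subst this
      exact hne (by simp only [Nat.add_sub_cancel]; omega)
    have := hpartner_even i hi
    exact Dvd.dvd.mul_left (by omega) _

theorem catalan_two_pow_sub_one_mod_eight {a : ℕ} (ha : 2 ≤ a) :
    catalan (2 ^ a - 1) % 8 = 5 := by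
  obtain ⟨b, rfl⟩ : ∃ b, a = b + 1 := ⟨a - 1, by omega⟩
  have hpos := Nat.two_pow_pos b
  rw [show 2 ^ (b + 1) - 1 = 2 * (2 ^ b - 1) + 1 by rw [pow_succ]; omega, catalan_two_mul_add_one]
  have hsum := sum_catalan_mul_catalan_mod_four (b := b) (m := 2 ^ b - 1) (by omega) (by omega)
  have hodd : Odd (catalan (2 ^ b - 1)) := (odd_catalan_iff _).mpr ⟨b, by omega⟩
  have hsq := Nat.eight_dvd_sq_sub_one_of_odd hodd
  have : 0 < catalan (2 ^ b - 1) ^ 2 := pow_pos hodd.pos 2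
  omega

/-- For `n ≥ 2`, the Catalan number `C(n)` is not congruent to `1` modulo `8`. -/
theorem catalan_not_one_mod_eight (n : ℕ) (hn : 2 ≤ n) : ¬ (catalan n ≡ 1 [MOD 8]) := by
  intro h
  unfold Nat.ModEq at h
  by_cases hpow : ∃ a, n + 1 = 2 ^ a
  · obtain ⟨a, ha⟩ := hpow
    have ha2 : 1 < a := (Nat.pow_lt_pow_iff_right (a := 2) (by norm_num)).mp (by omega)
    have := catalan_two_pow_sub_one_mod_eight ha2
    rw [← ha, Nat.add_sub_cancel] at this
    omega
  · have := mt (odd_catalan_iff n).mp hpow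
    rw [Nat.not_odd_iff_even, Nat.even_iff] at this
    omega
end
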